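/- arXiv:2007.00439 — 7 statements merged into one kernel-verified Lean document; each statement's English description precedes it below -/
import Mathlib

section
/- (DeMarr lemma, seminorm version) Let X be a real vector space and q a seminorm on X. Let Y be a nonempty finite-diameter subset of X that is compact in a topology making q continuous, with sup{q(x−y) : x,y ∈ Y} = r > 0. Then there exists u in the convex hull of Y with sup{q(u−y) : y ∈ Y} < r. -/
/-!
Compactness bounds the size of a finite subset of `Y` whose points are pairwise at `q`-distance
exactly `r`: by pigeonhole, each ball of a finite cover of `Y` by `q`-balls of radius `r / 2`
contains at most one of them. So there is such a set `F` of maximal cardinality; let `u` be its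
centroid. If `r ≤ q (u - y)` for some `y ∈ Y`, then, since `q (x - y) ≤ r` for all `x ∈ F`, the
average of the `q (x - y)` forces all of them to equal `r`, and `F ∪ {y}` contradicts maximality.
Finally `q (u - ·)` attains its supremum on the compact set `Y`.
-/

open Finset

theorem Finset.exists_max_card_of_card_le {α : Type*} {p : Finset α → Prop} {s : Finset α}
    (hs : p s) {N : ℕ} (hN : ∀ t, p t → #t ≤ N) : ∃ t, p t ∧ ∀ t', p t' → #t' ≤ #t := by
  set S := {n | ∃ t, p t ∧ #t = n}
  have hbdd : BddAbove S := ⟨N, by rintro _ ⟨t, ht, rfl⟩; exact hN t ht⟩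
  obtain ⟨t, ht, hmax⟩ := Nat.sSup_mem (s := S) ⟨#s, s, hs, rfl⟩ hbdd
  exact ⟨t, ht, fun t' ht' => hmax ▸ le_csSup hbdd ⟨t', ht', rfl⟩⟩

namespace Seminorm

variable {X : Type*} [AddCommGroup X] [Module ℝ X] (q : Seminorm ℝ X)

theorem map_centroid_sub_le {F : Finset X} (hF : F.Nonempty) (y : X) :
    q (F.centroid ℝ id - y) ≤ (#F : ℝ)⁻¹ * ∑ x ∈ F, q (x - y) := by
  have hw : ∑ x ∈ F, F.centroidWeights ℝ x = 1 := F.sum_centroidWeights_eq_one_of_nonempty ℝ hF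
  have hc : F.centroid ℝ id - y = ∑ x ∈ F, (#F : ℝ)⁻¹ • (x - y) := by
    rw [← vsub_eq_sub, F.centroid_vsub_const ℝ hF, centroid_def,
      affineCombination_eq_linear_combination _ _ _ hw]
    rfl
  rw [hc, mul_sum]
  exact q.convexOn.map_sum_le (fun _ _ => by positivity) (by simpa using hw) (fun _ _ => trivial)

theorem eq_of_le_map_centroid_sub {F : Finset X} (hF : F.Nonempty) {y : X} {r : ℝ}
    (hle : ∀ x ∈ F, q (x - y) ≤ r) (hge : r ≤ q (F.centroid ℝ id - y)) :
    ∀ x ∈ F, q (x - y) = r := by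
  have hcard : (0 : ℝ) < #F := by exact_mod_cast hF.card_pos
  refine (sum_eq_sum_iff_of_le hle).1 (le_antisymm (sum_le_sum hle) ?_)
  rw [sum_const, nsmul_eq_mul, ← le_inv_mul_iff₀ hcard]
  exact hge.trans (q.map_centroid_sub_le hF y)

theorem card_le_of_pairwise_le_of_subset_biUnion_ball {F C : Finset X} {ε : ℝ}
    (hF : (F : Set X).Pairwise fun x y => ε ≤ q (x - y))
    (hC : (F : Set X) ⊆ ⋃ c ∈ C, q.ball c (ε / 2)) : #F ≤ #C := by
  refine card_le_card_of_forall_subsingleton (fun x c => x ∈ q.ball c (ε / 2))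
    (fun x hx => by simpa using hC hx) fun c _ => ?_
  rintro x ⟨hx, hxc⟩ y ⟨hy, hyc⟩
  by_contra hxy
  rw [mem_ball] at hxc hyc
  have : q (x - y) ≤ q (x - c) + q (y - c) := by
    rw [← sub_sub_sub_cancel_right x y c]
    exact map_sub_le_add q _ _
  linarith [hF hx hy hxy]

theorem exists_finset_subset_biUnion_ball [TopologicalSpace X] [IsTopologicalAddGroup X]
    (hq : Continuous q) {Y : Set X} (hY : IsCompact Y) {ε : ℝ} (hε : 0 < ε) :
    ∃ C : Finset X, Y ⊆ ⋃ c ∈ C, q.ball c ε := by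
  obtain ⟨C, -, hC⟩ := hY.elim_nhds_subcover (fun c => q.ball c ε) fun c _ =>
    (isOpen_lt (hq.comp (continuous_id.sub continuous_const)) continuous_const).mem_nhds
      (by simpa using hε)
  exact ⟨C, hC⟩

theorem exists_mem_convexHull_forall_sub_lt {Y : Set X} (hY : Y.Nonempty) {r : ℝ} (hr : 0 < r)
    (hdiam : ∀ x ∈ Y, ∀ y ∈ Y, q (x - y) ≤ r) {N : ℕ}
    (hN : ∀ F : Finset X, ↑F ⊆ Y → (F : Set X).Pairwise (fun x y => q (x - y) = r) → #F ≤ N) :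
    ∃ u ∈ convexHull ℝ Y, ∀ y ∈ Y, q (u - y) < r := by
  classical
  obtain ⟨a, ha⟩ := hY
  obtain ⟨F, ⟨hFY, hF⟩, hFmax⟩ := exists_max_card_of_card_le
    (p := fun F : Finset X => ↑F ⊆ Y ∧ (F : Set X).Pairwise fun x y => q (x - y) = r)
    (s := {a}) (by simpa using ha) fun F hF => hN F hF.1 hF.2
  have hFne : F.Nonempty := card_pos.1 <| hFmax {a} (by simpa using ha)
  refine ⟨F.centroid ℝ id, convexHull_mono hFY (F.centroid_mem_convexHull hFne), fun y hy => ?_⟩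
  by_contra! hge
  have hFy := q.eq_of_le_map_centroid_sub hFne (fun x hx => hdiam x (hFY hx) y hy) hge
  have hyF : y ∉ F := fun h => by simpa [hr.ne] using hFy y h
  have := hFmax (insert y F) ⟨by simpa [Set.insert_subset_iff] using ⟨hy, hFY⟩, by
    rw [coe_insert]
    exact hF.insert fun x hx _ => ⟨by rw [map_sub_rev]; exact hFy x hx, hFy x hx⟩⟩
  rw [card_insert_of_notMem hyF] at this
  omega

end Seminorm

theorem stmt3_general {X : Type*} [AddCommGroup X] [Module ℝ X] [TopologicalSpace X]
    [IsTopologicalAddGroup X]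
    (q : Seminorm ℝ X) (hqc : Continuous q)
    (Y : Set X) (hYc : IsCompact Y) (hYne : Y.Nonempty)
    (r : ℝ) (hr : r = sSup {t : ℝ | ∃ x ∈ Y, ∃ y ∈ Y, t = q (x - y)})
    (hrpos : 0 < r) :
    ∃ u ∈ convexHull ℝ Y, sSup {t : ℝ | ∃ y ∈ Y, t = q (u - y)} < r := by
  have hdiam : ∀ x ∈ Y, ∀ y ∈ Y, q (x - y) ≤ r := by
    have hbdd : BddAbove {t : ℝ | ∃ x ∈ Y, ∃ y ∈ Y, t = q (x - y)} :=
      ((hYc.prod hYc).bddAbove_image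
        (hqc.comp (continuous_fst.sub continuous_snd)).continuousOn).mono
        (by rintro _ ⟨x, hx, y, hy, rfl⟩; exact ⟨(x, y), ⟨hx, hy⟩, rfl⟩)
    exact fun x hx y hy => hr ▸ le_csSup hbdd ⟨x, hx, y, hy, rfl⟩
  obtain ⟨C, hC⟩ := q.exists_finset_subset_biUnion_ball hqc hYc (half_pos hrpos)
  obtain ⟨u, hu, hlt⟩ := q.exists_mem_convexHull_forall_sub_lt hYne hrpos hdiam fun F hFY hF =>
    q.card_le_of_pairwise_le_of_subset_biUnion_ball (hF.mono' fun _ _ h => h.ge) (hFY.trans hC)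
  obtain ⟨y₀, hy₀, hmax⟩ := hYc.exists_isMaxOn hYne (f := fun y => q (u - y))
    (hqc.comp (continuous_const.sub continuous_id)).continuousOn
  refine ⟨u, hu, lt_of_le_of_lt (csSup_le ⟨_, y₀, hy₀, rfl⟩ ?_) (hlt y₀ hy₀)⟩
  rintro _ ⟨y, hy, rfl⟩
  exact hmax hy

/-- DeMarr lemma, seminorm version: if `q` is a continuous seminorm on a
real topological vector space, `Y` a nonempty compact subset with `q`-diameter
`r = sup {q(x-y) : x,y ∈ Y} > 0`, then some `u ∈ conv(Y)` has
`sup {q(u-y) : y ∈ Y} < r`. -/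
theorem stmt3 {X : Type*} [AddCommGroup X] [Module ℝ X] [TopologicalSpace X]
    [IsTopologicalAddGroup X] [ContinuousSMul ℝ X]
    (q : Seminorm ℝ X) (hqc : Continuous q)
    (Y : Set X) (hYc : IsCompact Y) (hYne : Y.Nonempty)
    (r : ℝ) (hr : r = sSup {t : ℝ | ∃ x ∈ Y, ∃ y ∈ Y, t = q (x - y)})
    (hrpos : 0 < r) :
    ∃ u ∈ convexHull ℝ Y, sSup {t : ℝ | ∃ y ∈ Y, t = q (u - y)} < r :=
  stmt3_general q hqc Y hYc hYne r hr hrpos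
end

section
/- Let S be a right reversible compact semitopological semigroup acting separately continuously on a subset K of a locally convex space X, and let q be a continuous seminorm on X. Suppose the action is asymptotically q-nonexpansive: for all x, y ∈ K there exists a left ideal I_{xy} of S with q(s.x − s.y) ≤ q(x−y) for all s ∈ I_{xy}. Then the action is super asymptotically q-nonexpansive: for every x ∈ K and t ∈ S there exists a left ideal I of S such that q(st.x − st.y) ≤ q(x−y) for all s ∈ I and all y ∈ K. -/
open Set

/-! For fixed `x` and `t`, the closures of the ideals `I_{xy}` are closed left ideals on which the
estimate persists, and so are their pullbacks `{s | s * t ∈ closure I_{xy}}`; these pullbacks are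
nonempty because `closure I_{xy}` meets the closed left ideal `S * t`. Right reversibility gives
the finite intersection property of nonempty closed left ideals, and compactness of `S` then makes
the intersection of all pullbacks a nonempty left ideal that works for every `y` at once. -/

def IsLeftIdeal {S : Type*} [Mul S] (I : Set S) : Prop :=
  ∀ s : S, ∀ a ∈ I, s * a ∈ I

def RightReversible (S : Type*) [Mul S] [TopologicalSpace S] : Prop :=
  ∀ I J : Set S, I.Nonempty → J.Nonempty → IsClosed I → IsClosed J →
    IsLeftIdeal I → IsLeftIdeal J → (I ∩ J).Nonempty

section LeftIdeal

variable {S : Type*}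

theorem IsLeftIdeal.inter [Mul S] {I J : Set S} (hI : IsLeftIdeal I) (hJ : IsLeftIdeal J) :
    IsLeftIdeal (I ∩ J) :=
  fun s _ ha => ⟨hI s _ ha.1, hJ s _ ha.2⟩

theorem IsLeftIdeal.iInter [Mul S] {ι : Sort*} {I : ι → Set S} (hI : ∀ i, IsLeftIdeal (I i)) :
    IsLeftIdeal (⋂ i, I i) :=
  fun s _ ha => mem_iInter.2 fun i => hI i s _ (mem_iInter.1 ha i)

theorem IsLeftIdeal.closure [Mul S] [TopologicalSpace S] [SeparatelyContinuousMul S]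
    {I : Set S} (hI : IsLeftIdeal I) : IsLeftIdeal (closure I) := fun s _ ha =>
  map_mem_closure (continuous_const_mul s) ha fun a ha => hI s a ha

theorem IsLeftIdeal.preimage_mul_right [Semigroup S] {I : Set S} (hI : IsLeftIdeal I) (t : S) :
    IsLeftIdeal {s | s * t ∈ I} := fun s a (ha : a * t ∈ I) =>
  show s * a * t ∈ I from (mul_assoc s a t).symm ▸ hI s _ ha

theorem isLeftIdeal_range_mul_right [Semigroup S] (t : S) : IsLeftIdeal (range (· * t)) := by
  rintro s _ ⟨a, rfl⟩
  exact ⟨s * a, mul_assoc s a t⟩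

end LeftIdeal

namespace RightReversible

variable {S : Type*} [Mul S] [TopologicalSpace S] (hS : RightReversible S)
include hS

theorem biInter_nonempty [Nonempty S] {ι : Type*} {I : ι → Set S}
    (hcl : ∀ i, IsClosed (I i)) (hne : ∀ i, (I i).Nonempty) (hid : ∀ i, IsLeftIdeal (I i))
    (u : Finset ι) : (⋂ i ∈ u, I i).Nonempty := by
  classical
  suffices (⋂ i ∈ u, I i).Nonempty ∧ IsClosed (⋂ i ∈ u, I i) ∧ IsLeftIdeal (⋂ i ∈ u, I i) from
    this.1
  induction u using Finset.induction_on with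
  | empty =>
    simp only [Finset.notMem_empty, iInter_of_empty, iInter_univ]
    exact ⟨univ_nonempty, isClosed_univ, fun _ _ _ => mem_univ _⟩
  | insert i u _ ih =>
    obtain ⟨hne_u, hcl_u, hid_u⟩ := ih
    rw [Finset.set_biInter_insert]
    exact ⟨hS _ _ (hne i) hne_u (hcl i) hcl_u (hid i) hid_u, (hcl i).inter hcl_u,
      (hid i).inter hid_u⟩

theorem iInter_nonempty [CompactSpace S] [Nonempty S] {ι : Type*} {I : ι → Set S}
    (hcl : ∀ i, IsClosed (I i)) (hne : ∀ i, (I i).Nonempty) (hid : ∀ i, IsLeftIdeal (I i)) :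
    (⋂ i, I i).Nonempty :=
  CompactSpace.iInter_nonempty hcl (hS.biInter_nonempty hcl hne hid)

end RightReversible

theorem RightReversible.exists_mul_right_mem {S : Type*} [Semigroup S] [TopologicalSpace S]
    [SeparatelyContinuousMul S] [CompactSpace S] [T2Space S] (hS : RightReversible S)
    {C : Set S} (hne : C.Nonempty) (hcl : IsClosed C) (hid : IsLeftIdeal C) (t : S) :
    ∃ s, s * t ∈ C := by
  have hclosed : IsClosed (range (· * t)) :=
    (isCompact_range (continuous_mul_const t)).isClosed
  obtain ⟨_, hC, s, rfl⟩ :=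
    hS C (range (· * t)) hne ⟨t * t, t, rfl⟩ hcl hclosed hid (isLeftIdeal_range_mul_right t)
  exact ⟨s, hC⟩

theorem stmt6_general {S X : Type*} [Semigroup S] [TopologicalSpace S] [T2Space S]
    [CompactSpace S]
    [AddCommGroup X] [Module ℝ X] [TopologicalSpace X]
    [IsTopologicalAddGroup X]
    (hlc : ∀ t : S, Continuous fun s : S => t * s)
    (hrc : ∀ t : S, Continuous fun s : S => s * t)
    (hrev : ∀ I J : Set S, I.Nonempty → J.Nonempty → IsClosed I → IsClosed J →
      (∀ s : S, ∀ x ∈ I, s * x ∈ I) → (∀ s : S, ∀ x ∈ J, s * x ∈ J) →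
      (I ∩ J).Nonempty)
    (K : Set X) (act : S → X → X)
    (hc1 : ∀ x ∈ K, Continuous fun s : S => act s x)
    (q : Seminorm ℝ X) (hqc : Continuous q)
    (hasym : ∀ x ∈ K, ∀ y ∈ K, ∃ I : Set S, I.Nonempty ∧
      (∀ s : S, ∀ a ∈ I, s * a ∈ I) ∧
      ∀ s ∈ I, q (act s x - act s y) ≤ q (x - y)) :
    ∀ x ∈ K, ∀ t : S, ∃ I : Set S, I.Nonempty ∧
      (∀ s : S, ∀ a ∈ I, s * a ∈ I) ∧
      ∀ s ∈ I, ∀ y ∈ K, q (act (s * t) x - act (s * t) y) ≤ q (x - y) := by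
  have : SeparatelyContinuousMul S := ⟨hlc _, hrc _⟩
  have hS : RightReversible S := hrev
  intro x hx t
  choose I hIne hIid hIq using fun y : K => hasym x hx y y.2
  have hCid (y : K) : IsLeftIdeal (closure (I y)) := IsLeftIdeal.closure (hIid y)
  let D (y : K) : Set S := {s | s * t ∈ closure (I y)}
  have hDcl (y : K) : IsClosed (D y) := isClosed_closure.preimage (hrc t)
  have hDne (y : K) : (D y).Nonempty :=
    hS.exists_mul_right_mem ((hIne y).mono subset_closure) isClosed_closure (hCid y) t
  have hDid (y : K) : IsLeftIdeal (D y) := (hCid y).preimage_mul_right t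
  have : Nonempty S := ⟨t⟩
  refine ⟨⋂ y, D y, hS.iInter_nonempty hDcl hDne hDid, IsLeftIdeal.iInter hDid, ?_⟩
  intro s hs y hy
  have hest_closed : IsClosed {u | q (act u x - act u y) ≤ q (x - y)} :=
    isClosed_le (hqc.comp ((hc1 x hx).sub (hc1 y hy))) continuous_const
  exact closure_minimal (hIq ⟨y, hy⟩) hest_closed (mem_iInter.1 hs ⟨y, hy⟩)

/-- for a right reversible compact semitopological semigroup acting
separately continuously on a subset `K` of a locally convex space, every
asymptotically `q`-nonexpansive action (for a continuous seminorm `q`) is super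
asymptotically `q`-nonexpansive. -/
theorem stmt6 {S X : Type*} [Semigroup S] [TopologicalSpace S] [T2Space S]
    [CompactSpace S]
    [AddCommGroup X] [Module ℝ X] [TopologicalSpace X]
    [IsTopologicalAddGroup X] [ContinuousSMul ℝ X] [LocallyConvexSpace ℝ X]
    (hlc : ∀ t : S, Continuous fun s : S => t * s)
    (hrc : ∀ t : S, Continuous fun s : S => s * t)
    (hrev : ∀ I J : Set S, I.Nonempty → J.Nonempty → IsClosed I → IsClosed J →
      (∀ s : S, ∀ x ∈ I, s * x ∈ I) → (∀ s : S, ∀ x ∈ J, s * x ∈ J) →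
      (I ∩ J).Nonempty)
    (K : Set X) (act : S → X → X)
    (hmaps : ∀ s : S, ∀ x ∈ K, act s x ∈ K)
    (haction : ∀ s t : S, ∀ x ∈ K, act (s * t) x = act s (act t x))
    (hc1 : ∀ x ∈ K, Continuous fun s : S => act s x)
    (hc2 : ∀ s : S, ContinuousOn (act s) K)
    (q : Seminorm ℝ X) (hqc : Continuous q)
    (hasym : ∀ x ∈ K, ∀ y ∈ K, ∃ I : Set S, I.Nonempty ∧
      (∀ s : S, ∀ a ∈ I, s * a ∈ I) ∧
      ∀ s ∈ I, q (act s x - act s y) ≤ q (x - y)) :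
    ∀ x ∈ K, ∀ t : S, ∃ I : Set S, I.Nonempty ∧
      (∀ s : S, ∀ a ∈ I, s * a ∈ I) ∧
      ∀ s ∈ I, ∀ y ∈ K, q (act (s * t) x - act (s * t) y) ≤ q (x - y) :=
  stmt6_general hlc hrc hrev K act hc1 q hqc hasym
end

section
/- Let S be a left reversible semitopological semigroup acting separately continuously on a nonempty compact subset Y of a Hausdorff topological space, with s.Y ⊆ Y for all s. Then the set F = ⋂_{s∈S} s.Y is nonempty and satisfies F ⊆ s.F for all s ∈ S. -/
open scoped Topology

/-- a left reversible semitopological semigroup acting separately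
continuously on a nonempty compact subset `Y` of a Hausdorff space with `s.Y ⊆ Y`
satisfies: `F = ⋂_{s} s.Y` is nonempty and `F ⊆ s.F` for all `s`. -/
theorem stmt7 {S T : Type*} [Semigroup S] [TopologicalSpace S] [T2Space S] [Nonempty S]
    [TopologicalSpace T] [T2Space T]
    (hlc : ∀ t : S, Continuous fun s : S => t * s)
    (hrc : ∀ t : S, Continuous fun s : S => s * t)
    (hrev : ∀ a b : S,
      (closure {x : S | ∃ s : S, x = a * s} ∩ closure {x : S | ∃ s : S, x = b * s}).Nonempty)
    (Y : Set T) (hYc : IsCompact Y) (hYne : Y.Nonempty)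
    (act : S → T → T)
    (hmaps : ∀ s : S, ∀ y ∈ Y, act s y ∈ Y)
    (haction : ∀ s t : S, ∀ y ∈ Y, act (s * t) y = act s (act t y))
    (hc1 : ∀ s : S, Continuous (act s))
    (hc2 : ∀ y ∈ Y, Continuous fun s : S => act s y) :
    (⋂ s : S, act s '' Y).Nonempty ∧
    ∀ s : S, (⋂ u : S, act u '' Y) ⊆ act s '' (⋂ u : S, act u '' Y) := by
  set R : S → Set S := fun a => {x : S | ∃ s : S, x = a * s} with hR
  set K : S → Set T := fun a => act a '' Y with hK
  have hKcomp : ∀ a, IsCompact (K a) := fun a => hYc.image (hc1 a)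
  have hKcl : ∀ a, IsClosed (K a) := fun a => (hKcomp a).isClosed
  have hKY : ∀ a, K a ⊆ Y := by
    rintro a x ⟨y, hy, rfl⟩; exact hmaps a y hy
  -- Lemma A: closure of right ideals
  have hA : ∀ a c : S, c ∈ closure (R a) → closure (R c) ⊆ closure (R a) := by
    intro a c hc
    have h1 : R c ⊆ closure (R a) := by
      rintro x ⟨t, rfl⟩
      have := image_closure_subset_closure_image (f := fun s : S => s * t) (s := R a) (hrc t)
      have hx : (fun s : S => s * t) c ∈ closure ((fun s : S => s * t) '' R a) :=
        this (Set.mem_image_of_mem _ hc)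
      have hsub : (fun s : S => s * t) '' R a ⊆ R a := by
        rintro z ⟨w, ⟨u, rfl⟩, rfl⟩
        exact ⟨u * t, mul_assoc a u t⟩
      have h2 := closure_mono hsub hx
      exact h2
    calc closure (R c) ⊆ closure (closure (R a)) := closure_mono h1
      _ = closure (R a) := closure_closure
  -- Lemma B: K monotone along closures of right ideals
  have hB : ∀ a c : S, c ∈ closure (R a) → K c ⊆ K a := by
    rintro a c hc x ⟨y, hy, rfl⟩
    have := image_closure_subset_closure_image (f := fun s : S => act s y) (s := R a) (hc2 y hy)
    have hx : act c y ∈ closure ((fun s : S => act s y) '' R a) :=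
      this (Set.mem_image_of_mem _ hc)
    have hsub : (fun s : S => act s y) '' R a ⊆ K a := by
      rintro z ⟨w, ⟨u, rfl⟩, rfl⟩
      simp only
      rw [haction a u y hy]
      exact Set.mem_image_of_mem _ (hmaps u y hy)
    have : act c y ∈ closure (K a) := closure_mono hsub hx
    rwa [(hKcl a).closure_eq] at this
  -- Lemma C: common point of closures of finitely many right ideals
  have hC : ∀ t : Finset S, ∃ c : S, ∀ a ∈ t, c ∈ closure (R a) := by
    classical
    intro t
    induction t using Finset.induction_on with
    | empty => exact ⟨Classical.arbitrary S, by simp⟩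
    | @insert a t ha ih =>
      obtain ⟨c, hc⟩ := ih
      obtain ⟨d, hd1, hd2⟩ := hrev c a
      refine ⟨d, ?_⟩
      intro b hb
      rcases Finset.mem_insert.mp hb with rfl | hb
      · exact hd2
      · exact hA b c (hc b hb) hd1
  -- helper: finite intersections of the K's together with a closed set condition
  refine ⟨?_, ?_⟩
  · -- nonemptiness
    have hmain : (Y ∩ ⋂ s : S, K s).Nonempty := by
      by_contra hemp
      rw [Set.not_nonempty_iff_eq_empty] at hemp
      obtain ⟨t, ht⟩ := hYc.elim_finite_subfamily_closed K hKcl hemp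
      obtain ⟨c, hc⟩ := hC t
      obtain ⟨y, hy⟩ := hYne
      have hmem : act c y ∈ Y ∩ ⋂ a ∈ t, K a := by
        refine ⟨hmaps c y hy, Set.mem_iInter₂.mpr fun a ha => ?_⟩
        exact hB a c (hc a ha) (Set.mem_image_of_mem _ hy)
      rw [ht] at hmem
      exact hmem
    obtain ⟨y, _, hy⟩ := hmain
    exact ⟨y, hy⟩
  · intro s x hx
    -- x ∈ ⋂ u, K u; find y ∈ F with act s y = x
    have hmain : (Y ∩ ⋂ u : S, (act s ⁻¹' {x} ∩ K u)).Nonempty := by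
      by_contra hemp
      rw [Set.not_nonempty_iff_eq_empty] at hemp
      obtain ⟨t, ht⟩ := hYc.elim_finite_subfamily_closed _
        (fun u => ((isClosed_singleton.preimage (hc1 s)).inter (hKcl u))) hemp
      obtain ⟨c, hc⟩ := hC t
      have hx' : x ∈ K (s * c) := Set.mem_iInter.mp hx (s * c)
      obtain ⟨y, hy, hxy⟩ := hx'
      have hy' : act c y ∈ Y := hmaps c y hy
      have hmem : act c y ∈ Y ∩ ⋂ u ∈ t, (act s ⁻¹' {x} ∩ K u) := by
        refine ⟨hy', Set.mem_iInter₂.mpr fun u hu => ⟨?_, ?_⟩⟩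
        · simp only [Set.mem_preimage, Set.mem_singleton_iff]
          rw [← haction s c y hy, hxy]
        · exact hB u c (hc u hu) (Set.mem_image_of_mem _ hy)
      rw [ht] at hmem
      exact hmem
    obtain ⟨y, hyY, hy⟩ := hmain
    have h1 : act s y = x := by
      have := Set.mem_iInter.mp hy (Classical.arbitrary S)
      exact this.1
    have h2 : y ∈ ⋂ u : S, act u '' Y :=
      Set.mem_iInter.mpr fun u => (Set.mem_iInter.mp hy u).2
    exact ⟨y, h2, h1⟩
end

section
/- Let S be a left reversible semitopological semigroup acting jointly continuously on a nonempty compact subset Y of a Hausdorff topological space. Then F = ⋂_{s∈S} s.Y is nonempty and satisfies s.F = F for all s ∈ S. -/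
open Set

/-!
Since `(a s).Y ⊆ a.Y` and `{w | w.Y ⊆ C}` is closed for closed `C`, `cl (aS).Y ⊆ a.Y`; with left
reversibility the compact sets `s.Y` form a directed family, so `F = ⋂ s, s.Y` is nonempty by
Cantor's intersection theorem. A continuous map commutes with the intersection of a directed family
of compact sets, whence `F ⊆ ⋂ t, s.(t.Y) = s.F`. Conversely, for `y ∈ F` we have `s.y ∈ w.Y` for
`w ∈ sS`, hence for `w ∈ cl (sS)` because `{w | q ∈ w.Y}` is closed (the projection `S × Y → S` is
a closed map); choosing `w ∈ cl (uS) ∩ cl (sS)` gives `s.y ∈ u.Y` for every `u`.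
-/

theorem iInter_image_subset_image_iInter_of_directed {X Z ι : Type*} [TopologicalSpace X]
    [T2Space X] [TopologicalSpace Z] [T1Space Z] [Nonempty ι] {t : ι → Set X}
    (htd : Directed (· ⊇ ·) t) (htc : ∀ i, IsCompact (t i)) {f : X → Z}
    (hf : ∀ i, ContinuousOn f (t i)) : ⋂ i, f '' t i ⊆ f '' ⋂ i, t i := by
  intro z hz
  have hclosed : ∀ i, IsClosed (t i ∩ f ⁻¹' {z}) := fun i =>
    (hf i).preimage_isClosed_of_isClosed (htc i).isClosed isClosed_singleton
  obtain ⟨x, hx⟩ := IsCompact.nonempty_iInter_of_directed_nonempty_isCompact_isClosed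
    (fun i => t i ∩ f ⁻¹' {z})
    (fun i j =>
      let ⟨k, hik, hjk⟩ := htd i j
      ⟨k, inter_subset_inter_left _ hik, inter_subset_inter_left _ hjk⟩)
    (fun i => by
      obtain ⟨x, hx, rfl⟩ := mem_iInter.1 hz i
      exact ⟨x, hx, rfl⟩)
    (fun i => (htc i).of_isClosed_subset (hclosed i) inter_subset_left) hclosed
  rw [mem_iInter] at hx
  exact ⟨x, mem_iInter.2 fun i => (hx i).1, (hx (Classical.arbitrary ι)).2⟩

section Action

variable {S T : Type*} [TopologicalSpace S] [TopologicalSpace T] {act : S → T → T} {Y : Set T}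

theorem isCompact_image_of_continuousOn_uncurry (hYc : IsCompact Y)
    (hact : ContinuousOn (Function.uncurry act) (univ ×ˢ Y)) (s : S) : IsCompact (act s '' Y) :=
  hYc.image_of_continuousOn (hact.uncurry_left (f := act) s (mem_univ s))

theorem isClosed_setOf_image_subset (hact : ContinuousOn (Function.uncurry act) (univ ×ˢ Y))
    {C : Set T} (hC : IsClosed C) : IsClosed {w : S | act w '' Y ⊆ C} := by
  have : {w : S | act w '' Y ⊆ C} = ⋂ y ∈ Y, (fun w => act w y) ⁻¹' C := by
    ext w
    simp [subset_def]
  rw [this]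
  refine isClosed_biInter fun y hy => hC.preimage ?_
  exact continuousOn_univ.1 (hact.uncurry_right (f := act) y hy)

theorem isClosed_setOf_mem_image [T1Space T] (hYc : IsCompact Y)
    (hact : ContinuousOn (Function.uncurry act) (univ ×ˢ Y)) (q : T) :
    IsClosed {w : S | q ∈ act w '' Y} := by
  have := isCompact_iff_compactSpace.1 hYc
  let g : S × Y → T := fun p => act p.1 p.2
  have hg : Continuous g := hact.comp_continuous
    (continuous_fst.prodMk (continuous_subtype_val.comp continuous_snd))
    fun p => ⟨mem_univ _, p.2.2⟩
  have : {w : S | q ∈ act w '' Y} = Prod.fst '' (g ⁻¹' {q}) := by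
    ext w
    simp [g]
  rw [this]
  exact isClosedMap_fst_of_compactSpace _ (isClosed_singleton.preimage hg)

variable [T2Space T] [Semigroup S] (hYc : IsCompact Y)
  (hact : ContinuousOn (Function.uncurry act) (univ ×ˢ Y))
  (hmaps : ∀ s : S, ∀ y ∈ Y, act s y ∈ Y)
  (haction : ∀ s t : S, ∀ y ∈ Y, act (s * t) y = act s (act t y))
include hYc hact hmaps haction

theorem image_subset_of_mem_closure_mul_left {a x : S}
    (hx : x ∈ closure {z : S | ∃ s : S, z = a * s}) : act x '' Y ⊆ act a '' Y := by
  have hclosed := (isCompact_image_of_continuousOn_uncurry hYc hact a).isClosed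
  refine closure_minimal ?_ (isClosed_setOf_image_subset hact hclosed) hx
  rintro _ ⟨s, rfl⟩ _ ⟨y, hy, rfl⟩
  exact ⟨act s y, hmaps s y hy, (haction a s y hy).symm⟩

variable (hrev : ∀ a b : S,
  (closure {x : S | ∃ s : S, x = a * s} ∩ closure {x : S | ∃ s : S, x = b * s}).Nonempty)
include hrev

theorem directed_image_of_leftReversible : Directed (· ⊇ ·) fun s => act s '' Y := fun a b =>
  let ⟨x, hxa, hxb⟩ := hrev a b
  ⟨x, image_subset_of_mem_closure_mul_left hYc hact hmaps haction hxa,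
    image_subset_of_mem_closure_mul_left hYc hact hmaps haction hxb⟩

theorem image_iInter_image_subset (s : S) :
    act s '' (⋂ u : S, act u '' Y) ⊆ ⋂ u : S, act u '' Y := by
  rintro _ ⟨y, hy, rfl⟩
  refine mem_iInter.2 fun u => ?_
  obtain ⟨x, hxu, hxs⟩ := hrev u s
  refine image_subset_of_mem_closure_mul_left hYc hact hmaps haction hxu ?_
  refine closure_minimal ?_ (isClosed_setOf_mem_image hYc hact (act s y)) hxs
  rintro _ ⟨t, rfl⟩
  obtain ⟨z, hz, rfl⟩ := mem_iInter.1 hy t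
  exact ⟨z, hz, haction s t z hz⟩

theorem iInter_image_subset_image_iInter_image [Nonempty S] (s : S) :
    ⋂ u : S, act u '' Y ⊆ act s '' (⋂ u : S, act u '' Y) := by
  have hcont : ContinuousOn (act s) Y := hact.uncurry_left (f := act) s (mem_univ s)
  calc ⋂ u : S, act u '' Y
      ⊆ ⋂ t : S, act (s * t) '' Y := iInter_mono' fun t => ⟨s * t, subset_rfl⟩
    _ = ⋂ t : S, act s '' (act t '' Y) := by
        refine iInter_congr fun t => ?_
        rw [image_image]
        exact image_congr fun z hz => haction s t z hz
    _ ⊆ act s '' (⋂ u : S, act u '' Y) :=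
        iInter_image_subset_image_iInter_of_directed
          (directed_image_of_leftReversible hYc hact hmaps haction hrev)
          (isCompact_image_of_continuousOn_uncurry hYc hact)
          fun t => hcont.mono (image_subset_iff.2 fun z hz => hmaps t z hz)

end Action

theorem stmt8_general {S T : Type*} [Semigroup S] [TopologicalSpace S] [Nonempty S]
    [TopologicalSpace T] [T2Space T]
    (hrev : ∀ a b : S,
      (closure {x : S | ∃ s : S, x = a * s} ∩ closure {x : S | ∃ s : S, x = b * s}).Nonempty)
    (Y : Set T) (hYc : IsCompact Y) (hYne : Y.Nonempty)
    (act : S → T → T)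
    (hmaps : ∀ s : S, ∀ y ∈ Y, act s y ∈ Y)
    (haction : ∀ s t : S, ∀ y ∈ Y, act (s * t) y = act s (act t y))
    (hjc : ContinuousOn (fun p : S × T => act p.1 p.2) (Set.univ ×ˢ Y)) :
    (⋂ s : S, act s '' Y).Nonempty ∧
    ∀ s : S, act s '' (⋂ u : S, act u '' Y) = ⋂ u : S, act u '' Y := by
  have hcompact := isCompact_image_of_continuousOn_uncurry hYc hjc
  refine ⟨IsCompact.nonempty_iInter_of_directed_nonempty_isCompact_isClosed _
      (directed_image_of_leftReversible hYc hjc hmaps haction hrev)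
      (fun s => hYne.image _) hcompact fun s => (hcompact s).isClosed, fun s => ?_⟩
  exact (image_iInter_image_subset hYc hjc hmaps haction hrev s).antisymm
    (iInter_image_subset_image_iInter_image hYc hjc hmaps haction hrev s)

/-- a left reversible semitopological semigroup acting jointly
continuously on a nonempty compact subset `Y` of a Hausdorff space with `s.Y ⊆ Y`
satisfies: `F = ⋂_{s} s.Y` is nonempty and `s.F = F` for all `s`. -/
theorem stmt8 {S T : Type*} [Semigroup S] [TopologicalSpace S] [T2Space S] [Nonempty S]
    [TopologicalSpace T] [T2Space T]
    (hlc : ∀ t : S, Continuous fun s : S => t * s)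
    (hrc : ∀ t : S, Continuous fun s : S => s * t)
    (hrev : ∀ a b : S,
      (closure {x : S | ∃ s : S, x = a * s} ∩ closure {x : S | ∃ s : S, x = b * s}).Nonempty)
    (Y : Set T) (hYc : IsCompact Y) (hYne : Y.Nonempty)
    (act : S → T → T)
    (hmaps : ∀ s : S, ∀ y ∈ Y, act s y ∈ Y)
    (haction : ∀ s t : S, ∀ y ∈ Y, act (s * t) y = act s (act t y))
    (hjc : ContinuousOn (fun p : S × T => act p.1 p.2) (Set.univ ×ˢ Y)) :
    (⋂ s : S, act s '' Y).Nonempty ∧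
    ∀ s : S, act s '' (⋂ u : S, act u '' Y) = ⋂ u : S, act u '' Y :=
  stmt8_general hrev Y hYc hYne act hmaps haction hjc
end

section
/- Let S be a semitopological semigroup whose underlying topological space is normal. If the space CB(S) of bounded continuous real functions on S admits a right invariant mean, then S is right reversible (any two closed left ideals of S intersect). -/
open scoped Topology BoundedContinuousFunction

/-- if a semitopological semigroup `S` is a normal topological space and
`CB(S)` admits a right invariant mean, then `S` is right reversible: any two closed
left ideals intersect. -/
theorem stmt9 {S : Type*} [Semigroup S] [TopologicalSpace S] [T2Space S] [NormalSpace S]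
    (hlc : ∀ t : S, Continuous fun s : S => t * s)
    (hrc : ∀ t : S, Continuous fun s : S => s * t)
    (m : (S →ᵇ ℝ) → ℝ)
    (hadd : ∀ f g : S →ᵇ ℝ, m (f + g) = m f + m g)
    (hsmul : ∀ (c : ℝ) (f : S →ᵇ ℝ), m (c • f) = c * m f)
    (hpos : ∀ f : S →ᵇ ℝ, (∀ t, 0 ≤ f t) → 0 ≤ m f)
    (hone : m 1 = 1)
    (hrinv : ∀ (f g : S →ᵇ ℝ) (s : S), (∀ t, g t = f (t * s)) → m g = m f) :
    ∀ I J : Set S, I.Nonempty → J.Nonempty → IsClosed I → IsClosed J →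
      (∀ s : S, ∀ x ∈ I, s * x ∈ I) → (∀ s : S, ∀ x ∈ J, s * x ∈ J) →
      (I ∩ J).Nonempty := by
  intro I J ⟨a, ha⟩ ⟨b, hb⟩ hIc hJc hI hJ
  by_contra hne
  rw [Set.not_nonempty_iff_eq_empty] at hne
  obtain ⟨f, hf0, hf1, hf01⟩ := exists_continuous_zero_one_of_isClosed hIc hJc
    (Set.disjoint_iff_inter_eq_empty.mpr hne)
  -- bundle f as a bounded continuous function
  set F : S →ᵇ ℝ := BoundedContinuousFunction.mkOfBound f 1 (by
    intro x y
    have hx := hf01 x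
    have hy := hf01 y
    rw [Real.dist_eq]
    rw [abs_le]
    constructor <;> simp at hx hy ⊢ <;> linarith [hx.1, hx.2, hy.1, hy.2]) with hF
  have hm0 : m 0 = 0 := by
    have := hsmul 0 0
    simpa using this
  -- g : t ↦ F (t * a) is identically 0
  have hga : ∀ t : S, (0 : S →ᵇ ℝ) t = F (t * a) := by
    intro t
    have : t * a ∈ I := hI t a ha
    simp [hF, hf0 this]
  have h0 : m F = (0 : ℝ) := by
    have := hrinv F 0 a hga
    rw [hm0] at this
    linarith [this]
  -- h : t ↦ F (t * b) is identically 1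
  have hgb : ∀ t : S, (1 : S →ᵇ ℝ) t = F (t * b) := by
    intro t
    have : t * b ∈ J := hJ t b hb
    simp [hF, hf1 this]
  have h1 : m F = (1 : ℝ) := by
    have := hrinv F 1 b hgb
    rw [hone] at this
    linarith [this]
  linarith [h0, h1]
end

section
/- Let S be a semigroup acting on the closed unit disk K ⊆ ℝ² (polar coordinates) by f^n g^m (r,θ) = (r/2^n, 2^m θ mod 2π), for (n,m) ∈ ℕ₀ × ℕ₀ \ {(0,0)}. This action is not super asymptotically nonexpansive: there exist x ∈ K and t ∈ S such that for every left ideal I of S there exist s ∈ I and y ∈ K with ‖st.x − st.y‖ > ‖x − y‖. -/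
/-!
Take `x = 1` and `t = g`. Any left ideal containing `f^n g^m` also contains
`s = f^n g^(n+m+1)`, and then `st = f^n g^K` with `K = n+m+2 > n`. The point
`y = e^(iπ/2^K)` lies within `π/2^K < 2/2^n` of `x`, but doubling the angle `K` times sends
it to `-1`, so `st` maps `x` and `y` to `±2^(-n)`, at distance `2/2^n`.
-/

open Real Complex

noncomputable def polarAction (p : ℕ × ℕ) (z : ℂ) : ℂ :=
  if z = 0 then 0 else ((‖z‖ / 2 ^ p.1 : ℝ) : ℂ) * (z / ((‖z‖ : ℝ) : ℂ)) ^ (2 ^ p.2)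

lemma polarAction_of_norm_eq_one {z : ℂ} (hz : ‖z‖ = 1) (p : ℕ × ℕ) :
    polarAction p z = z ^ 2 ^ p.2 / 2 ^ p.1 := by
  have hz0 : z ≠ 0 := norm_ne_zero_iff.mp (by rw [hz]; exact one_ne_zero)
  simp [polarAction, hz0, hz, div_eq_inv_mul]

lemma exp_I_mul_pi_div_two_pow_pow_two_pow (K : ℕ) :
    exp (I * ↑(π / 2 ^ K)) ^ 2 ^ K = -1 := by
  rw [← Complex.exp_nat_mul, ← exp_pi_mul_I]
  congr 1
  push_cast
  field_simp

lemma pi_div_two_pow_lt_two_div_two_pow {n K : ℕ} (h : n < K) : π / 2 ^ K < 2 / 2 ^ n := by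
  rw [div_lt_div_iff₀ (by positivity) (by positivity)]
  calc π * 2 ^ n < 4 * 2 ^ n := by gcongr; exact pi_lt_four
    _ = 2 * 2 ^ (n + 1) := by ring
    _ ≤ 2 * 2 ^ K := by gcongr <;> norm_num; omega

/-- the action of the semigroup
`S = {f^n g^m : (n,m) ∈ ℕ₀×ℕ₀ \ {(0,0)}}` (indices composed additively) on the closed
unit disk `K ⊆ ℂ`, where `f^n g^m` sends the point with polar coordinates `(r,θ)` to
`(r/2^n, 2^m θ mod 2π)`, is not super asymptotically nonexpansive: there exist
`x ∈ K` and `t ∈ S` such that for every left ideal `I` of `S` there are `s ∈ I` and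
`y ∈ K` with `‖st.x − st.y‖ > ‖x − y‖`. -/
theorem stmt16 (act : ℕ × ℕ → ℂ → ℂ)
    (hact : ∀ (p : ℕ × ℕ) (z : ℂ), act p z =
      if z = 0 then 0
      else ((‖z‖ / 2 ^ p.1 : ℝ) : ℂ) * (z / ((‖z‖ : ℝ) : ℂ)) ^ (2 ^ p.2)) :
    ∃ x ∈ {z : ℂ | ‖z‖ ≤ 1}, ∃ t : ℕ × ℕ, t ≠ (0, 0) ∧
      ∀ I : Set (ℕ × ℕ), I.Nonempty → (∀ p ∈ I, p ≠ (0, 0)) →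
        (∀ p ∈ I, ∀ q : ℕ × ℕ, q ≠ (0, 0) → q + p ∈ I) →
        ∃ s ∈ I, ∃ y ∈ {z : ℂ | ‖z‖ ≤ 1},
          ‖x - y‖ < ‖act (s + t) x - act (s + t) y‖ := by
  obtain rfl : act = polarAction := funext fun p => funext (hact p)
  refine ⟨1, by simp, (0, 1), by decide, ?_⟩
  rintro J ⟨⟨n, m⟩, hp⟩ - hJ
  set K := n + m + 2
  set y := exp (I * ↑(π / 2 ^ K))
  have hy : ‖y‖ = 1 := norm_exp_I_mul_ofReal _
  have hst : (0, n + 1) + (n, m) + (0, 1) = (n, K) := by ext <;> simp; omega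
  refine ⟨(0, n + 1) + (n, m), hJ _ hp _ (by simp), y, hy.le, ?_⟩
  rw [hst, polarAction_of_norm_eq_one norm_one, polarAction_of_norm_eq_one hy,
    exp_I_mul_pi_div_two_pow_pow_two_pow]
  calc ‖1 - y‖ ≤ π / 2 ^ K := by
        rw [norm_sub_rev, ← Real.norm_of_nonneg (by positivity : 0 ≤ π / 2 ^ K)]
        exact Real.norm_exp_I_mul_ofReal_sub_one_le
    _ < 2 / 2 ^ n := pi_div_two_pow_lt_two_div_two_pow (by omega)
    _ = ‖(1 : ℂ) ^ 2 ^ K / 2 ^ n - -1 / 2 ^ n‖ := by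
        rw [one_pow, ← sub_div, sub_neg_eq_add, norm_div]
        norm_num
end

section
/- Let (X,d) be a metric space with a translation-invariant metric on a vector space, and suppose an action of a semitopological semigroup S on a subset K of X is super asymptotically d-nonexpansive with respect to (not necessarily closed) left ideals. If the action is separately continuous for a topology τ weaker than the d-topology and d is τ-lower semicontinuous, then the ideals can be taken closed: for each x ∈ K and t ∈ S there exists a τ-closed left ideal J of S with d(st.x, st.y) ≤ d(x,y) for all s ∈ J and y ∈ K. -/
open scoped Topology

theorem mul_mem_closure_of_mul_mem {S : Type*} [Mul S] [TopologicalSpace S] {I : Set S}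
    (hI : ∀ a : S, ∀ b ∈ I, a * b ∈ I) {a : S} (ha : Continuous fun s : S => a * s) :
    ∀ b ∈ closure I, a * b ∈ closure I :=
  fun _ hb => map_mem_closure ha hb (hI a)

theorem LowerSemicontinuous.le_of_mem_closure {α β : Type*} [TopologicalSpace α]
    [LinearOrder β] {f : α → β} (hf : LowerSemicontinuous f) {I : Set α} {c : β}
    (hI : ∀ s ∈ I, f s ≤ c) : ∀ s ∈ closure I, f s ≤ c :=
  (hf.isClosed_preimage c).closure_subset_iff.2 hI

theorem stmt17_general {S X : Type*} [Semigroup S] [TopologicalSpace S]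
    [TopologicalSpace X]
    (hlc : ∀ t : S, Continuous fun s : S => t * s)
    (hrc : ∀ t : S, Continuous fun s : S => s * t)
    (d : X → X → ℝ)
    (hlsc : LowerSemicontinuous fun p : X × X => d p.1 p.2)
    (K : Set X) (act : S → X → X)
    (hscont : ∀ x : X, Continuous fun s : S => act s x)
    (hsuper : ∀ x ∈ K, ∀ t : S, ∃ I : Set S, I.Nonempty ∧
      (∀ a : S, ∀ b ∈ I, a * b ∈ I) ∧
      ∀ s ∈ I, ∀ y ∈ K, d (act (s * t) x) (act (s * t) y) ≤ d x y) :
    ∀ x ∈ K, ∀ t : S, ∃ J : Set S, J.Nonempty ∧ IsClosed J ∧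
      (∀ a : S, ∀ b ∈ J, a * b ∈ J) ∧
      ∀ s ∈ J, ∀ y ∈ K, d (act (s * t) x) (act (s * t) y) ≤ d x y := by
  intro x hx t
  obtain ⟨I, hne, hideal, hI⟩ := hsuper x hx t
  refine ⟨closure I, hne.closure, isClosed_closure,
    fun a => mul_mem_closure_of_mul_mem hideal (hlc a), fun s hs y hy => ?_⟩
  have hdist : LowerSemicontinuous fun s : S => d (act (s * t) x) (act (s * t) y) :=
    hlsc.comp (((hscont x).comp (hrc t)).prodMk ((hscont y).comp (hrc t)))
  exact hdist.le_of_mem_closure (fun c hc => hI c hc y hy) s hs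

/-- for a super asymptotically `d`-nonexpansive action of a
semitopological semigroup on `K ⊆ X`, where the orbit maps `s ↦ s.x` are
`τ`-continuous, `τ` is weaker than the `d`-topology and `d` is `τ`-lower
semicontinuous, the witnessing left ideals can be taken closed. -/
theorem stmt17 {S X : Type*} [Semigroup S] [TopologicalSpace S] [T2Space S]
    [AddCommGroup X] [TopologicalSpace X]
    (hlc : ∀ t : S, Continuous fun s : S => t * s)
    (hrc : ∀ t : S, Continuous fun s : S => s * t)
    (d : X → X → ℝ)
    (hsymm : ∀ x y, d x y = d y x)
    (htri : ∀ x y z, d x z ≤ d x y + d y z)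
    (hzero : ∀ x y, d x y = 0 ↔ x = y)
    (hinv : ∀ x y z, d (x + y) (x + z) = d y z)
    (hweak : ∀ U : Set X, IsOpen U → ∀ x ∈ U, ∃ ε > 0, {y | d x y < ε} ⊆ U)
    (hlsc : LowerSemicontinuous fun p : X × X => d p.1 p.2)
    (K : Set X) (act : S → X → X)
    (hmaps : ∀ s : S, ∀ x ∈ K, act s x ∈ K)
    (haction : ∀ s t : S, ∀ x : X, act (s * t) x = act s (act t x))
    (hscont : ∀ x : X, Continuous fun s : S => act s x)
    (hsuper : ∀ x ∈ K, ∀ t : S, ∃ I : Set S, I.Nonempty ∧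
      (∀ a : S, ∀ b ∈ I, a * b ∈ I) ∧
      ∀ s ∈ I, ∀ y ∈ K, d (act (s * t) x) (act (s * t) y) ≤ d x y) :
    ∀ x ∈ K, ∀ t : S, ∃ J : Set S, J.Nonempty ∧ IsClosed J ∧
      (∀ a : S, ∀ b ∈ J, a * b ∈ J) ∧
      ∀ s ∈ J, ∀ y ∈ K, d (act (s * t) x) (act (s * t) y) ≤ d x y :=
  stmt17_general hlc hrc d hlsc K act hscont hsuper
end
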